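/- (Soundness of SLD(D) resolution.) Let D be a qualification domain and P a QLP(D) program. Assume G₀ ⊢* G is a finite SLD(D) resolution computation from a goal G₀ ending in a solved goal G ≡ σ | Δ, and let (σ, μ) be the solution associated to G, where μ = ω_Δ is the valuation determined by the defining constraints of Δ. Then the computed answer (σ, μ) is a solution of G₀. -/

import Mathlib

/-- A qualification domain: a lattice with least element `⊥`, greatest element `⊤`,
and an attenuation operation `att` that is associative, commutative, monotone,
satisfies `att d ⊤ = d`, `att d ⊥ = ⊥`, `att d e < e` for `d, e ∉ {⊥, ⊤}`, and
distributes over binary meets. -/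
class QualDomain (D : Type*) extends Lattice D, BoundedOrder D where
  att : D → D → D
  att_assoc : ∀ a b c : D, att (att a b) c = att a (att b c)
  att_comm : ∀ a b : D, att a b = att b a
  att_mono : ∀ a b c d : D, a ≤ b → c ≤ d → att a c ≤ att b d
  att_top : ∀ a : D, att a ⊤ = a
  att_bot : ∀ a : D, att a ⊥ = ⊥
  att_lt : ∀ a b : D, a ≠ ⊥ → a ≠ ⊤ → b ≠ ⊥ → b ≠ ⊤ → att a b < b
  att_inf : ∀ a b c : D, att a (b ⊓ c) = att a b ⊓ att a c

/-- A signature: constructor (function) symbols and predicate symbols with arities. -/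
structure Signature where
  Func : Type
  Pred : Type
  fArity : Func → ℕ
  pArity : Pred → ℕ

/-- Terms over a signature, with variables drawn from `ℕ`. -/
inductive Term (Sg : Signature) : Type
  | var : ℕ → Term Sg
  | app : (f : Sg.Func) → (Fin (Sg.fArity f) → Term Sg) → Term Sg

/-- Atoms `p(t₁, …, tₙ)` over a signature. -/
structure Atom (Sg : Signature) : Type where
  pred : Sg.Pred
  args : Fin (Sg.pArity pred) → Term Sg

/-- Substitutions of terms for variables. -/
abbrev Subst (Sg : Signature) := ℕ → Term Sg

/-- Applying a substitution to a term. -/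
def Term.applySubst {Sg : Signature} : Term Sg → Subst Sg → Term Sg
  | .var v, θ => θ v
  | .app f a, θ => .app f (fun i => (a i).applySubst θ)

/-- Applying a substitution to an atom. -/
def Atom.applySubst {Sg : Signature} (A : Atom Sg) (θ : Subst Sg) : Atom Sg :=
  ⟨A.pred, fun i => (A.args i).applySubst θ⟩

/-- A `D`-annotated atom `A#d` is a pair of an atom and a qualification value. -/
abbrev AnnAtom (Sg : Signature) (D : Type*) := Atom Sg × D

/-- The `D`-entailment relation: `A#d ⊨ A'#d'` iff `A' = Aθ` for some
substitution `θ` and `d' ⊑ d`. -/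
def Entails {Sg : Signature} {D : Type*} [QualDomain D]
    (x y : AnnAtom Sg D) : Prop :=
  ∃ θ : Subst Sg, y.1 = x.1.applySubst θ ∧ y.2 ≤ x.2

/-- The annotated Herbrand base `At_Σ(D)`: all annotated atoms `A#d` with `d ≠ ⊥`. -/
def HerbrandBase (Sg : Signature) (D : Type*) [QualDomain D] :
    Set (AnnAtom Sg D) := {x | x.2 ≠ ⊥}

/-- An open Herbrand interpretation over `D`: a subset of the annotated Herbrand
base closed under `D`-entailment. -/
def IsInterp {Sg : Signature} {D : Type*} [QualDomain D]
    (I : Set (AnnAtom Sg D)) : Prop :=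
  I ⊆ HerbrandBase Sg D ∧
  ∀ x ∈ I, ∀ y ∈ HerbrandBase Sg D, Entails x y → y ∈ I

/-- A qualified definite Horn clause `A ←d B₁,…,Bₖ`. -/
structure Clause (Sg : Signature) (D : Type*) where
  head : Atom Sg
  d : D
  body : List (Atom Sg)

/-- The immediate-consequences operator `T_P`. -/
def TP {Sg : Signature} {D : Type*} [QualDomain D]
    (P : Set (Clause Sg D)) (I : Set (AnnAtom Sg D)) : Set (AnnAtom Sg D) :=
  { x | ∃ C ∈ P, ∃ θ : Subst Sg, ∃ ds : Fin C.body.length → D,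
      (∀ i, ds i ≠ ⊥) ∧
      (∀ i, ((C.body.get i).applySubst θ, ds i) ∈ I) ∧
      x.1 = C.head.applySubst θ ∧ x.2 ≠ ⊥ ∧
      x.2 ≤ QualDomain.att C.d (Finset.univ.inf ds) }

/-- `I` is a model of a clause `A ←d B₁,…,Bₖ`. -/
def ModelsClause {Sg : Signature} {D : Type*} [QualDomain D]
    (I : Set (AnnAtom Sg D)) (C : Clause Sg D) : Prop :=
  ∀ (θ : Subst Sg) (ds : Fin C.body.length → D),
    (∀ i, ds i ≠ ⊥) →
    (∀ i, ((C.body.get i).applySubst θ, ds i) ∈ I) →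
    (C.head.applySubst θ, QualDomain.att C.d (Finset.univ.inf ds)) ∈ I

/-- `I` is a model of the program `P`. -/
def Models {Sg : Signature} {D : Type*} [QualDomain D]
    (I : Set (AnnAtom Sg D)) (P : Set (Clause Sg D)) : Prop :=
  ∀ C ∈ P, ModelsClause I C

/-- Iterates `T_P↑ⁿ(∅)` of the operator `T_P` starting from the empty set. -/
def TPiter {Sg : Signature} {D : Type*} [QualDomain D]
    (P : Set (Clause Sg D)) : ℕ → Set (AnnAtom Sg D)
  | 0 => ∅
  | n + 1 => TP P (TPiter P n)

/-- Derivability in the calculus `QHL(D)` via the single rule `QMP(D)`. -/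
inductive Derives {Sg : Signature} {D : Type*} [QualDomain D]
    (P : Set (Clause Sg D)) : AnnAtom Sg D → Prop
  | qmp (C : Clause Sg D) (hC : C ∈ P) (θ : Subst Sg)
      (ds : Fin C.body.length → D)
      (hds : ∀ i, ds i ≠ ⊥)
      (hbody : ∀ i, Derives P ((C.body.get i).applySubst θ, ds i))
      (d' : D) (hd' : d' ≠ ⊥)
      (hle : d' ≤ QualDomain.att C.d (Finset.univ.inf ds)) :
      Derives P (C.head.applySubst θ, d')

/-- Derivability in `QHL(D)` using exactly `n` inference steps. -/
inductive DerivesN {Sg : Signature} {D : Type*} [QualDomain D]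
    (P : Set (Clause Sg D)) : ℕ → AnnAtom Sg D → Prop
  | qmp (C : Clause Sg D) (hC : C ∈ P) (θ : Subst Sg)
      (ds : Fin C.body.length → D) (ns : Fin C.body.length → ℕ)
      (hds : ∀ i, ds i ≠ ⊥)
      (hbody : ∀ i, DerivesN P (ns i) ((C.body.get i).applySubst θ, ds i))
      (d' : D) (hd' : d' ≠ ⊥)
      (hle : d' ≤ QualDomain.att C.d (Finset.univ.inf ds)) :
      DerivesN P (Finset.univ.sum ns + 1) (C.head.applySubst θ, d')

/-! ### Goals and SLD(D) resolution -/

/-- The set of (term) variables of a term. -/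
def Term.vars {Sg : Signature} : Term Sg → Set ℕ
  | .var v => {v}
  | .app _ a => ⋃ i, (a i).vars

/-- The set of (term) variables of an atom. -/
def Atom.vars {Sg : Signature} (A : Atom Sg) : Set ℕ := ⋃ i, (A.args i).vars

/-- The set of (term) variables of a clause. -/
def Clause.vars {Sg : Signature} {D : Type*} (C : Clause Sg D) : Set ℕ :=
  C.head.vars ∪ {v | ∃ B ∈ C.body, v ∈ Atom.vars B}

/-- Composition of substitutions: `(σ.comp τ) v = (σ v) τ`. -/
def Subst.comp {Sg : Signature} (σ τ : Subst Sg) : Subst Sg :=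
  fun v => (σ v).applySubst τ

/-- A substitution is idempotent iff `σσ = σ`. -/
def Subst.Idem {Sg : Signature} (σ : Subst Sg) : Prop := σ.comp σ = σ

/-- The domain of a substitution: the variables it moves. -/
def Subst.dom {Sg : Signature} (σ : Subst Sg) : Set ℕ :=
  {v | σ v ≠ Term.var v}

/-- Qualification constraints over `D`, with qualification variables drawn
from `ℕ`: threshold constraints `α ∘ W ⊒ β` and defining constraints
`W = d ∘ ⊓{W₁,…,Wₖ}`. -/
inductive QConstraint (D : Type*) : Type _
  | threshold (α : D) (W : ℕ) (β : D)
  | defining (W : ℕ) (d : D) (Ws : List ℕ)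

/-- Greatest lower bound of a list of qualification values (`⊤` for `[]`). -/
def listInf {D : Type*} [QualDomain D] (l : List D) : D :=
  l.foldr (· ⊓ ·) ⊤

/-- Satisfaction of a qualification constraint by a valuation `ρ`. -/
def QConstraint.sat {D : Type*} [QualDomain D] (ρ : ℕ → D) :
    QConstraint D → Prop
  | .threshold α W β => β ≤ QualDomain.att α (ρ W)
  | .defining W d Ws => ρ W = QualDomain.att d (listInf (Ws.map ρ))

/-- Well-formedness of a qualification constraint: in `α ∘ W ⊒ β` both `α` and
`β` belong to `D \ {⊥}` and `α ⊒ β`; in `W = d ∘ ⊓{W₁,…,Wₖ}`, `d ∈ D \ {⊥}`. -/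
def QConstraint.WF {D : Type*} [QualDomain D] : QConstraint D → Prop
  | .threshold α _ β => α ≠ ⊥ ∧ β ≠ ⊥ ∧ β ≤ α
  | .defining _ d _ => d ≠ ⊥

/-- The variable constrained by a qualification constraint. -/
def QConstraint.cvar {D : Type*} : QConstraint D → ℕ
  | .threshold _ W _ => W
  | .defining W _ _ => W

/-- All qualification variables occurring in a constraint. -/
def QConstraint.wvarSet {D : Type*} : QConstraint D → Set ℕ
  | .threshold _ W _ => {W}
  | .defining W _ Ws => insert W {v | v ∈ Ws}

/-- Whether a constraint is a threshold constraint. -/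
def QConstraint.isThreshold {D : Type*} : QConstraint D → Prop
  | .threshold _ _ _ => True
  | .defining _ _ _ => False

/-- `war(Δ)`: qualification variables occurring in a constraint set. -/
def war {D : Type*} (Δ : Set (QConstraint D)) : Set ℕ :=
  {v | ∃ c ∈ Δ, v ∈ c.wvarSet}

/-- `dom(Δ)`: qualification variables constrained by some constraint of `Δ`. -/
def domC {D : Type*} (Δ : Set (QConstraint D)) : Set ℕ :=
  {v | ∃ c ∈ Δ, c.cvar = v}

/-- `W >_Δ W'` iff `Δ` contains a defining constraint for `W` mentioning `W'`
on its right-hand side. -/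
def dependsOn {D : Type*} (Δ : Set (QConstraint D)) (W W' : ℕ) : Prop :=
  ∃ d Ws, QConstraint.defining W d Ws ∈ Δ ∧ W' ∈ Ws

/-- A constraint set `Δ` is admissible iff it is satisfiable by a valuation
into `D \ {⊥}`, each variable occurring in `Δ` has exactly one constraint for
it in `Δ`, and the transitive closure of `>_Δ` is irreflexive. -/
def Admissible {D : Type*} [QualDomain D] (Δ : Set (QConstraint D)) : Prop :=
  (∃ ρ : ℕ → D, (∀ v, ρ v ≠ ⊥) ∧ ∀ c ∈ Δ, c.sat ρ) ∧
  (∀ v ∈ war Δ, ∃! c, c ∈ Δ ∧ c.cvar = v) ∧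
  Irreflexive (Relation.TransGen (dependsOn Δ))

/-- A goal `A̅ | σ | Δ`: a conjunction of atoms annotated with qualification
variables, a substitution, and a set of qualification constraints. -/
structure Goal (Sg : Signature) (D : Type*) where
  atoms : List (Atom Sg × ℕ)
  subst : Subst Sg
  cons : Set (QConstraint D)

/-- `var(A̅)`: term variables of the atoms of a goal. -/
def Goal.avars {Sg : Signature} {D : Type*} (G : Goal Sg D) : Set ℕ :=
  {v | ∃ p ∈ G.atoms, v ∈ Atom.vars p.1}

/-- `war(A̅)`: qualification variables annotating the atoms of a goal. -/
def Goal.awvars {Sg : Signature} {D : Type*} (G : Goal Sg D) : Set ℕ :=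
  {W | ∃ p ∈ G.atoms, p.2 = W}

/-- `var(G) = var(A̅) ∪ dom(σ)`. -/
def Goal.vars {Sg : Signature} {D : Type*} (G : Goal Sg D) : Set ℕ :=
  G.avars ∪ G.subst.dom

/-- `war(G) = war(A̅) ∪ dom(Δ)`. -/
def Goal.wvars {Sg : Signature} {D : Type*} (G : Goal Sg D) : Set ℕ :=
  G.awvars ∪ domC G.cons

/-- The conditions for `G ≡ A̅ | σ | Δ` to be a goal: `σ` is idempotent with
domain disjoint from `var(A̅)`; `Δ` is well-formed and admissible; every
qualification variable annotating an atom of `A̅` has exactly one threshold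
constraint in `Δ`, and `Δ` has no other threshold constraints. -/
structure IsGoal {Sg : Signature} {D : Type*} [QualDomain D]
    (G : Goal Sg D) : Prop where
  idem : G.subst.Idem
  disj : G.subst.dom ∩ G.avars = ∅
  wf : ∀ c ∈ G.cons, c.WF
  adm : Admissible G.cons
  thr : ∀ W ∈ G.awvars, ∃! c, c ∈ G.cons ∧ ∃ α β, c = QConstraint.threshold α W β
  thr_only : ∀ (α : D) (W : ℕ) (β : D),
    QConstraint.threshold α W β ∈ G.cons → W ∈ G.awvars

/-- A goal is solved iff its atom conjunction is empty and its constraint set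
is admissible and contains only defining constraints. -/
def Solved {Sg : Signature} {D : Type*} [QualDomain D] (G : Goal Sg D) : Prop :=
  G.atoms = [] ∧ Admissible G.cons ∧ ∀ c ∈ G.cons, ¬ c.isThreshold

/-- The substitution renaming variables along `π`. -/
def varRenaming {Sg : Signature} (π : ℕ → ℕ) : Subst Sg :=
  fun v => Term.var (π v)

/-- `C` is a variant of a clause of `P`: it is obtained from some clause of `P`
by an injective renaming of its variables. -/
def IsVariant {Sg : Signature} {D : Type*} (P : Set (Clause Sg D))
    (C : Clause Sg D) : Prop :=
  ∃ C₀ ∈ P, ∃ π : ℕ → ℕ, Function.Injective π ∧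
    C.head = C₀.head.applySubst (varRenaming π) ∧
    C.body = C₀.body.map (fun B => B.applySubst (varRenaming π)) ∧
    C.d = C₀.d

/-- `θ` unifies the atoms `A` and `H`. -/
def Unifies {Sg : Signature} (θ : Subst Sg) (A H : Atom Sg) : Prop :=
  A.applySubst θ = H.applySubst θ

/-- `σ₁` is a most general unifier (in Robinson's sense) of `A` and `H`. -/
def IsMGU {Sg : Signature} (σ₁ : Subst Sg) (A H : Atom Sg) : Prop :=
  Unifies σ₁ A H ∧ ∀ θ : Subst Sg, Unifies θ A H → σ₁.comp θ = θ

/-- An `SLD(D)` resolution step from `G₀` to `G₁` using the clause variant `C₁`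
and m.g.u. `σ₁`, selecting the atom at position `i` of `G₀`:
`L̅, A#W, R̅ | σ | α∘W ⊒ β, Δ ⊢ (L̅, B₁#W₁,…,Bₖ#Wₖ, R̅)σ₁ | σσ₁ | Δ₁` where
`C₁ ≡ H ←d B₁,…,Bₖ` is a fresh variant of a clause of `P` with `d ∘ α ⊒ β`,
`σ₁` is an m.g.u. of `A` and `H`, `W₁,…,Wₖ` are fresh qualification variables,
and `Δ₁ = { d∘α∘Wᵢ ⊒ β | 1 ≤ i ≤ k } ∪ { W = d ∘ ⊓{W₁,…,Wₖ} } ∪ Δ`. -/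
def StepAt {Sg : Signature} {D : Type*} [QualDomain D]
    (P : Set (Clause Sg D)) (G₀ G₁ : Goal Sg D) (C₁ : Clause Sg D)
    (σ₁ : Subst Sg) (i : ℕ) : Prop :=
  ∃ (L R : List (Atom Sg × ℕ)) (A : Atom Sg) (W : ℕ) (α β : D)
    (Δ : Set (QConstraint D)) (Ws : List ℕ),
    G₀.atoms = L ++ (A, W) :: R ∧ L.length = i ∧
    G₀.cons = insert (QConstraint.threshold α W β) Δ ∧
    QConstraint.threshold α W β ∉ Δ ∧
    IsVariant P C₁ ∧ Disjoint C₁.vars G₀.vars ∧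
    β ≤ QualDomain.att C₁.d α ∧
    IsMGU σ₁ A C₁.head ∧
    Ws.length = C₁.body.length ∧ Ws.Nodup ∧ (∀ w ∈ Ws, w ∉ G₀.wvars) ∧
    G₁.atoms = (L ++ C₁.body.zip Ws ++ R).map
      (fun p => (p.1.applySubst σ₁, p.2)) ∧
    G₁.subst = G₀.subst.comp σ₁ ∧
    G₁.cons = {c | ∃ w ∈ Ws, c = QConstraint.threshold (QualDomain.att C₁.d α) w β}
      ∪ insert (QConstraint.defining W C₁.d Ws) Δ

/-- An `SLD(D)` resolution step (selecting some atom). -/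
def Step {Sg : Signature} {D : Type*} [QualDomain D]
    (P : Set (Clause Sg D)) (G₀ G₁ : Goal Sg D) (C₁ : Clause Sg D)
    (σ₁ : Subst Sg) : Prop :=
  ∃ i, StepAt P G₀ G₁ C₁ σ₁ i

/-- Finitely many `SLD(D)` resolution steps. -/
def Steps {Sg : Signature} {D : Type*} [QualDomain D]
    (P : Set (Clause Sg D)) : Goal Sg D → Goal Sg D → Prop :=
  Relation.ReflTransGen (fun G G' => ∃ C₁ σ₁, Step P G G' C₁ σ₁)

/-- `(θ, ρ)` is a solution of the goal `G ≡ A̅ | σ | Δ`: `θ = σθ`, `ρ`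
satisfies every constraint of `Δ`, and `P ⊢_{QHL(D)} Aθ#(Wρ)` for every
annotated atom `A#W` of `A̅`. -/
def IsSolution {Sg : Signature} {D : Type*} [QualDomain D]
    (P : Set (Clause Sg D)) (G : Goal Sg D) (θ : Subst Sg) (ρ : ℕ → D) : Prop :=
  G.subst.comp θ = θ ∧
  (∀ c ∈ G.cons, c.sat ρ) ∧
  ∀ p ∈ G.atoms, Derives P (p.1.applySubst θ, ρ p.2)

/-- `μ` is the valuation `ω_Δ` determined by the defining constraints of `Δ`:
`μ W = d ∘ ⊓{μ W₁, …, μ Wₖ}` whenever `W = d ∘ ⊓{W₁,…,Wₖ} ∈ Δ`, and `μ W = ⊥`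
for every `W` outside `dom(Δ)`. -/
def IsOmega {D : Type*} [QualDomain D] (Δ : Set (QConstraint D))
    (μ : ℕ → D) : Prop :=
  (∀ W, W ∉ domC Δ → μ W = ⊥) ∧
  ∀ (W : ℕ) (d : D) (Ws : List ℕ), QConstraint.defining W d Ws ∈ Δ →
    μ W = QualDomain.att d (listInf (Ws.map μ))

/-- `(θ, ρ)` is a solution of `G` whose `QHL(D)` witnessing derivations use
exactly `n` inference steps in total. -/
def IsSolutionN {Sg : Signature} {D : Type*} [QualDomain D]
    (P : Set (Clause Sg D)) (G : Goal Sg D) (θ : Subst Sg) (ρ : ℕ → D)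
    (n : ℕ) : Prop :=
  G.subst.comp θ = θ ∧
  (∀ c ∈ G.cons, c.sat ρ) ∧
  ∃ ns : Fin G.atoms.length → ℕ,
    (∀ j, DerivesN P (ns j) ((G.atoms.get j).1.applySubst θ, ρ (G.atoms.get j).2)) ∧
    Finset.univ.sum ns = n

/-!
Soundness is proved backwards along the computation. For the solved goal `G ≡ σ | Δ` the pair
`(id, ω_Δ)` satisfies `G`, and one resolution step `G₀ ⊢ G₁` with m.g.u. `σ₁` turns a pair
`(τ, μ)` satisfying `G₁` into `(σ₁τ, μ)` satisfying `G₀`: the side atoms are untouched, the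
selected atom `A#W` is derived by one `QMP(D)` step from the clause variant, and its threshold
`α ∘ W ⊒ β` follows from the thresholds `d ∘ α ∘ Wᵢ ⊒ β` and `W = d ∘ ⊓{W₁,…,Wₖ}` because
attenuation distributes over meets. Since every threshold has `β ≠ ⊥` and `d ∘ ⊥ = ⊥`, no
value `μ W` involved is `⊥`, as `QMP(D)` requires.
-/

namespace QualDomain

variable {D : Type*} [QualDomain D]

theorem ne_bot_of_le_att {a x β : D} (hβ : β ≠ ⊥) (h : β ≤ att a x) : x ≠ ⊥ := by
  rintro rfl
  rw [att_bot] at h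
  exact hβ (le_bot_iff.mp h)

theorem le_att_listInf {β c : D} {l : List D} (hc : β ≤ c)
    (h : ∀ x ∈ l, β ≤ att c x) : β ≤ att c (listInf l) := by
  induction l with
  | nil => simpa [listInf, att_top] using hc
  | cons a l ih =>
    change β ≤ att c (a ⊓ listInf l)
    rw [att_inf]
    exact le_inf (h a List.mem_cons_self) (ih fun x hx => h x (List.mem_cons_of_mem a hx))

end QualDomain

theorem listInf_le {D : Type*} [QualDomain D] {l : List D} {x : D} (hx : x ∈ l) :
    listInf l ≤ x :=
  -- `listInf l` is `Multiset.inf ↑l` by definition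
  Multiset.inf_le (s := (l : Multiset D)) hx

section Soundness

variable {Sg : Signature} {D : Type*} [QualDomain D]

theorem Term.applySubst_comp (t : Term Sg) (σ τ : Subst Sg) :
    t.applySubst (σ.comp τ) = (t.applySubst σ).applySubst τ := by
  induction t with
  | var v => rfl
  | app f a ih => exact congrArg _ (funext ih)

theorem Atom.applySubst_comp (A : Atom Sg) (σ τ : Subst Sg) :
    A.applySubst (σ.comp τ) = (A.applySubst σ).applySubst τ := by
  simp only [Atom.applySubst, Term.applySubst_comp]

theorem Subst.comp_var (σ : Subst Sg) : σ.comp Term.var = σ := by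
  funext v
  change (σ v).applySubst Term.var = σ v
  induction σ v with
  | var v => rfl
  | app f a ih => exact congrArg _ (funext ih)

theorem Subst.comp_assoc (σ τ υ : Subst Sg) :
    (σ.comp τ).comp υ = σ.comp (τ.comp υ) :=
  funext fun v => (Term.applySubst_comp (σ v) τ υ).symm

theorem Term.applySubst_eq_self {t : Term Sg} {σ : Subst Sg}
    (h : ∀ v ∈ t.vars, σ v = Term.var v) : t.applySubst σ = t := by
  induction t with
  | var v => exact h v rfl
  | app f a ih =>
    exact congrArg _ (funext fun i => ih i fun v hv => h v (Set.mem_iUnion.2 ⟨i, hv⟩))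

theorem Atom.applySubst_eq_self {A : Atom Sg} {σ : Subst Sg}
    (h : ∀ v ∈ A.vars, σ v = Term.var v) : A.applySubst σ = A := by
  obtain ⟨p, args⟩ := A
  exact congrArg _ (funext fun i =>
    Term.applySubst_eq_self fun v hv => h v (Set.mem_iUnion.2 ⟨i, hv⟩))

theorem IsGoal.applySubst_atom {G : Goal Sg D} (hG : IsGoal G) {p : Atom Sg × ℕ}
    (hp : p ∈ G.atoms) : p.1.applySubst G.subst = p.1 := by
  refine Atom.applySubst_eq_self fun v hv => ?_
  by_contra hne
  have hv' : v ∈ G.subst.dom ∩ G.avars := ⟨hne, p, hp, hv⟩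
  rwa [hG.disj] at hv'

theorem Derives.of_isVariant {P : Set (Clause Sg D)} {C : Clause Sg D} (hC : IsVariant P C)
    (θ : Subst Sg) (ρ : ℕ → D) {Ws : List ℕ} (hlen : Ws.length = C.body.length)
    (hpos : ∀ w ∈ Ws, ρ w ≠ ⊥)
    (hbody : ∀ p ∈ C.body.zip Ws, Derives P (p.1.applySubst θ, ρ p.2))
    {d' : D} (hd' : d' ≠ ⊥) (hle : d' ≤ QualDomain.att C.d (listInf (Ws.map ρ))) :
    Derives P (C.head.applySubst θ, d') := by
  obtain ⟨head, d, body⟩ := C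
  obtain ⟨C₀, hC₀, π, -, rfl, rfl, rfl⟩ := hC
  simp only [List.length_map] at hlen
  have hj (j : Fin C₀.body.length) : j.val < Ws.length := by rw [hlen]; exact j.isLt
  let ds : Fin C₀.body.length → D := fun j => ρ Ws[j.val]
  have hzip (j : Fin C₀.body.length) : (C₀.body[j.val].applySubst (varRenaming π), Ws[j.val])
      ∈ (C₀.body.map fun B => B.applySubst (varRenaming π)).zip Ws := by
    rw [List.mem_iff_getElem]
    exact ⟨j, by simp [hlen], by simp⟩
  have hinf : listInf (Ws.map ρ) ≤ Finset.univ.inf ds :=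
    Finset.le_inf fun j _ => listInf_le (List.mem_map_of_mem (List.getElem_mem (hj j)))
  rw [← Atom.applySubst_comp]
  refine Derives.qmp C₀ hC₀ _ ds (fun j => hpos _ (List.getElem_mem _)) (fun j => ?_) d' hd'
    (hle.trans (QualDomain.att_mono _ _ _ _ le_rfl hinf))
  rw [List.get_eq_getElem, Atom.applySubst_comp]
  exact hbody _ (hzip j)

def ThresholdsNeBot (Δ : Set (QConstraint D)) : Prop :=
  ∀ α W β, QConstraint.threshold α W β ∈ Δ → β ≠ ⊥

/-- `(θ, ρ)` is a solution of `G` (`IsSolution`) except for the condition `θ = σθ`. -/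
def SatisfiesGoal (P : Set (Clause Sg D)) (G : Goal Sg D) (θ : Subst Sg) (ρ : ℕ → D) : Prop :=
  (∀ c ∈ G.cons, c.sat ρ) ∧ ∀ p ∈ G.atoms, Derives P (p.1.applySubst θ, ρ p.2)

theorem Solved.satisfiesGoal {P : Set (Clause Sg D)} {G : Goal Sg D} (hG : Solved G)
    {μ : ℕ → D} (hμ : IsOmega G.cons μ) : SatisfiesGoal P G Term.var μ := by
  refine ⟨fun c hc => ?_, fun p hp => by simp [hG.1] at hp⟩
  cases c with
  | threshold α W β => exact absurd trivial (hG.2.2 _ hc)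
  | defining W d Ws => exact hμ.2 W d Ws hc

namespace StepAt

variable {P : Set (Clause Sg D)} {G₀ G₁ : Goal Sg D} {C₁ : Clause Sg D} {σ₁ : Subst Sg} {i : ℕ}

theorem subst_eq (h : StepAt P G₀ G₁ C₁ σ₁ i) : G₁.subst = G₀.subst.comp σ₁ := by
  obtain ⟨L, R, A, W, α, β, Δ, Ws, -, -, -, -, -, -, -, -, -, -, -, -, hsubst, -⟩ := h
  exact hsubst

theorem thresholdsNeBot (h : StepAt P G₀ G₁ C₁ σ₁ i) (h₀ : ThresholdsNeBot G₀.cons) :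
    ThresholdsNeBot G₁.cons := by
  obtain ⟨L, R, A, W, α, β, Δ, Ws, -, -, hcons₀, -, -, -, -, -, -, -, -, -, -, hcons₁⟩ := h
  have hβ : β ≠ ⊥ := h₀ α W β (hcons₀ ▸ Set.mem_insert _ _)
  intro α' W' β' hmem
  rw [hcons₁] at hmem
  rcases hmem with ⟨w, -, heq⟩ | hmem | hmem
  · cases heq
    exact hβ
  · cases hmem
  · exact h₀ _ _ _ (hcons₀ ▸ Set.mem_insert_of_mem _ hmem)

theorem satisfiesGoal (h : StepAt P G₀ G₁ C₁ σ₁ i) (h₀ : ThresholdsNeBot G₀.cons)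
    {τ : Subst Sg} {μ : ℕ → D} (h₁ : SatisfiesGoal P G₁ τ μ) :
    SatisfiesGoal P G₀ (σ₁.comp τ) μ := by
  obtain ⟨L, R, A, W, α, β, Δ, Ws, hatoms₀, -, hcons₀, -, hvar, -, hβα, hmgu, hlen, -, -,
    hatoms₁, -, hcons₁⟩ := h
  obtain ⟨hsat₁, hder₁⟩ := h₁
  have hβ : β ≠ ⊥ := h₀ α W β (hcons₀ ▸ Set.mem_insert _ _)
  have hdef : μ W = QualDomain.att C₁.d (listInf (Ws.map μ)) :=
    hsat₁ (.defining W C₁.d Ws) (by rw [hcons₁]; exact Or.inr (Set.mem_insert _ _))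
  have hthr : ∀ w ∈ Ws, β ≤ QualDomain.att (QualDomain.att C₁.d α) (μ w) :=
    fun w hw => hsat₁ (.threshold _ w β) (by rw [hcons₁]; exact Or.inl ⟨w, hw, rfl⟩)
  have hβW : β ≤ QualDomain.att α (μ W) := by
    rw [hdef, ← QualDomain.att_assoc, QualDomain.att_comm α]
    exact QualDomain.le_att_listInf hβα (by simpa using hthr)
  have hder : ∀ p ∈ L ++ C₁.body.zip Ws ++ R,
      Derives P (p.1.applySubst (σ₁.comp τ), μ p.2) := fun p hp => by
    rw [Atom.applySubst_comp]
    exact hder₁ _ (hatoms₁ ▸ List.mem_map_of_mem hp)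
  refine ⟨fun c hc => ?_, fun p hp => ?_⟩
  · rw [hcons₀] at hc
    rcases hc with rfl | hc
    · exact hβW
    · exact hsat₁ c (by rw [hcons₁]; exact Or.inr (Set.mem_insert_of_mem _ hc))
  · rw [hatoms₀] at hp
    simp only [List.mem_append, List.mem_cons] at hp
    rcases hp with hp | rfl | hp
    · exact hder p (by simp [hp])
    · rw [Atom.applySubst_comp, hmgu.1, ← Atom.applySubst_comp]
      exact Derives.of_isVariant hvar _ μ hlen
        (fun w hw => QualDomain.ne_bot_of_le_att hβ (hthr w hw))
        (fun p hp => hder p (by simp [hp])) (QualDomain.ne_bot_of_le_att hβ hβW) hdef.le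
    · exact hder p (by simp [hp])

end StepAt

theorem Steps.exists_satisfiesGoal {P : Set (Clause Sg D)} {G' G : Goal Sg D}
    (h : Steps P G' G) (hG : Solved G) {μ : ℕ → D} (hμ : IsOmega G.cons μ)
    (h' : ThresholdsNeBot G'.cons) :
    ∃ τ, G.subst = G'.subst.comp τ ∧ SatisfiesGoal P G' τ μ := by
  induction h using Relation.ReflTransGen.head_induction_on with
  | refl => exact ⟨Term.var, (Subst.comp_var _).symm, hG.satisfiesGoal hμ⟩
  | head hstep _ ih =>
    obtain ⟨C₁, σ₁, i, hstep⟩ := hstep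
    obtain ⟨τ, hτ, hsat⟩ := ih (hstep.thresholdsNeBot h')
    exact ⟨σ₁.comp τ, by rw [hτ, hstep.subst_eq, Subst.comp_assoc], hstep.satisfiesGoal h' hsat⟩

end Soundness

theorem sld_soundness_general {Sg : Signature} {D : Type*} [QualDomain D]
    (P : Set (Clause Sg D))
    (G₀ G : Goal Sg D) (hG₀ : IsGoal G₀)
    (hsteps : Steps P G₀ G) (hsolved : Solved G)
    (μ : ℕ → D) (hμ : IsOmega G.cons μ) :
    IsSolution P G₀ G.subst μ := by
  obtain ⟨τ, hτ, hsat, hder⟩ :=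
    hsteps.exists_satisfiesGoal hsolved hμ fun _ _ _ h => (hG₀.wf _ h).2.1
  refine ⟨by rw [hτ, ← Subst.comp_assoc, hG₀.idem], hsat, fun p hp => ?_⟩
  rw [hτ, Atom.applySubst_comp, hG₀.applySubst_atom hp]
  exact hder p hp

/-- Soundness of `SLD(D)` resolution: if `G₀ ⊢* G` is a finite `SLD(D)`
resolution computation from a goal `G₀` ending in a solved goal `G ≡ σ | Δ`,
and `μ = ω_Δ` is the valuation determined by the defining constraints of `Δ`,
then the computed answer `(σ, μ)` is a solution of `G₀`. -/
theorem sld_soundness {Sg : Signature} {D : Type*} [QualDomain D]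
    (P : Set (Clause Sg D)) (hP : ∀ C ∈ P, C.d ≠ ⊥)
    (G₀ G : Goal Sg D) (hG₀ : IsGoal G₀)
    (hsteps : Steps P G₀ G) (hsolved : Solved G)
    (μ : ℕ → D) (hμ : IsOmega G.cons μ) :
    IsSolution P G₀ G.subst μ :=
  sld_soundness_general P G₀ G hG₀ hsteps hsolved μ hμ
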